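/- Let C be a category with terminal object. For all objects X and Y of C^∞ = C^{N^op}, there is an isomorphism in the topos of trees: L^Set(C^∞(X,Y)) ≅ C^∞(L^C X, L^C Y), where L^Set is the later functor on S = Set^{N^op} and L^C is the later functor on C^∞. -/

import Mathlib

open CategoryTheory CategoryTheory.Limits

universe v u

/-- An object of `C^∞ = C^{ℕᵒᵖ}`: a cochain `X(0) ← X(1) ← X(2) ← ⋯` in `C`. -/
structure GObj (C : Type u) [Category.{v} C] where
  obj : ℕ → C
  res : ∀ n, obj (n + 1) ⟶ obj n

namespace GObj

variable {C : Type u} [Category.{v} C]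

/-- A morphism in `C^∞`: a natural transformation between cochains. -/
@[ext]
structure GHom (X Y : GObj C) where
  app : ∀ n, X.obj n ⟶ Y.obj n
  nat : ∀ n, X.res n ≫ app n = app (n + 1) ≫ Y.res n

instance : Category (GObj C) where
  Hom := GHom
  id X := { app := fun _ => 𝟙 _, nat := by intro n; simp }
  comp {X Y Z} f g :=
    { app := fun n => f.app n ≫ g.app n
      nat := by
        intro n
        rw [← Category.assoc, f.nat, Category.assoc, g.nat, ← Category.assoc] }
  id_comp f := by apply GHom.ext; funext n; simp
  comp_id f := by apply GHom.ext; funext n; simp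
  assoc f g h := by apply GHom.ext; funext n; simp

@[simp] theorem id_app (X : GObj C) (n : ℕ) : (𝟙 X : X ⟶ X).app n = 𝟙 (X.obj n) := rfl

@[simp] theorem comp_app {X Y Z : GObj C} (f : X ⟶ Y) (g : Y ⟶ Z) (n : ℕ) :
    (f ≫ g).app n = f.app n ≫ g.app n := rfl

/-- The constant cochain on an object of `C`. -/
def constG (T : C) : GObj C where
  obj _ := T
  res _ := 𝟙 T

end GObj

namespace GObj

variable {C : Type u} [Category.{v} C]

/-- A truncated natural transformation `(f_0, …, f_n)` from `X` to `Y`. -/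
@[ext]
structure TruncHom (X Y : GObj C) (n : ℕ) where
  app : ∀ k, k ≤ n → (X.obj k ⟶ Y.obj k)
  nat : ∀ k (h : k + 1 ≤ n),
    X.res k ≫ app k (Nat.le_of_succ_le h) = app (k + 1) h ≫ Y.res k

/-- Restriction of truncated natural transformations: forget the last component. -/
def tres {X Y : GObj C} {n : ℕ} (f : TruncHom X Y (n + 1)) : TruncHom X Y n where
  app k h := f.app k (h.trans (Nat.le_succ n))
  nat k h := f.nat k (h.trans (Nat.le_succ n))

/-- The truncated identity natural transformation. -/
def tid (X : GObj C) (n : ℕ) : TruncHom X X n where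
  app k _ := 𝟙 (X.obj k)
  nat k _ := by simp

/-- Componentwise composition of truncated natural transformations. -/
def tcomp {X Y Z : GObj C} {n : ℕ} (g : TruncHom Y Z n) (f : TruncHom X Y n) :
    TruncHom X Z n where
  app k h := f.app k h ≫ g.app k h
  nat k h := by
    rw [← Category.assoc, f.nat k h, Category.assoc, g.nat k h, ← Category.assoc]

/-- The truncation of a (global) morphism of `C^∞`. -/
def trunc {X Y : GObj C} (f : X ⟶ Y) (n : ℕ) : TruncHom X Y n where
  app k _ := f.app k
  nat k _ := f.nat k

/-- The hom-object of the `S`-enrichment of `C^∞`: an object of the topos of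
trees `S = Set^{ℕᵒᵖ}` whose `n`-th component is the set of truncated natural
transformations of length `n`, with restriction forgetting the last component. -/
def homObj (X Y : GObj C) : GObj (Type v) where
  obj n := TruncHom X Y n
  res _ := TypeCat.ofHom tres

end GObj

namespace GObj

/-- Object part of the later functor on the topos of trees. -/
def LaterTObj (A : GObj (Type u)) : ℕ → Type u
  | 0 => PUnit
  | n + 1 => A.obj n

/-- The later functor `L : S → S` on (objects of) the topos of trees. -/
def LaterT (A : GObj (Type u)) : GObj (Type u) where
  obj := LaterTObj A
  res n :=
    match n with
    | 0 => TypeCat.ofHom fun _ => PUnit.unit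
    | n + 1 => A.res n

/-- The `next` natural transformation `ν_A : A → L A` in the topos of trees. -/
def nextT (A : GObj (Type u)) : A ⟶ LaterT A where
  app n :=
    match n with
    | 0 => TypeCat.ofHom fun _ => PUnit.unit
    | n + 1 => TypeCat.ofHom (A.res n)
  nat n := by
    cases n with
    | zero => rfl
    | succ n => rfl

/-- Pointwise cartesian product in the topos of trees. -/
def GProd (A B : GObj (Type u)) : GObj (Type u) where
  obj n := A.obj n × B.obj n
  res n := TypeCat.ofHom fun p => (A.res n p.1, B.res n p.2)

/-- Pairing for the pointwise cartesian product. -/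
def gpair {Z A B : GObj (Type u)} (f : Z ⟶ A) (g : Z ⟶ B) : Z ⟶ GProd A B where
  app n := TypeCat.ofHom fun z => (f.app n z, g.app n z)
  nat n := by
    ext z
    exact Prod.ext (by exact ConcreteCategory.congr_hom (f.nat n) z) (by exact ConcreteCategory.congr_hom (g.nat n) z)

/-- Evaluation `[A → B] × A → B` for the exponential `[A → B] = homObj A B`
in the topos of trees. -/
def gev (A B : GObj (Type u)) : GProd (homObj A B) A ⟶ B where
  app n := TypeCat.ofHom fun p => p.1.app n (le_refl n) p.2
  nat n := by
    ext p
    exact ConcreteCategory.congr_hom (p.1.nat n (le_refl (n + 1))) p.2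

end GObj
namespace GObj

variable {C : Type u} [Category.{v} C]

/-- Object part (componentwise) of the later functor on `C^∞`. -/
def LObjAux (T : C) (X : GObj C) : ℕ → C
  | 0 => T
  | n + 1 => X.obj n

/-- The later functor on objects: shift the cochain and put the terminal object
in degree `0`. -/
def LObj {T : C} (hT : IsTerminal T) (X : GObj C) : GObj C where
  obj := LObjAux T X
  res n :=
    match n with
    | 0 => hT.from (X.obj 0)
    | n + 1 => X.res n

/-- Morphism part (componentwise) of the later functor on `C^∞`. -/
def LMapAux {T : C} (hT : IsTerminal T) {X Y : GObj C} (f : X ⟶ Y) :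
    ∀ n, LObjAux T X n ⟶ LObjAux T Y n
  | 0 => 𝟙 T
  | n + 1 => f.app n

/-- The later functor `L^C : C^∞ → C^∞`. -/
def LFunctor {T : C} (hT : IsTerminal T) : GObj C ⥤ GObj C where
  obj X := LObj hT X
  map {X Y} f :=
    { app := LMapAux hT f
      nat := by
        intro n
        cases n with
        | zero => exact hT.hom_ext _ _
        | succ n => exact f.nat n }
  map_id X := by
    apply GHom.ext; funext n
    cases n with
    | zero => rfl
    | succ n => rfl
  map_comp f g := by
    apply GHom.ext; funext n
    cases n with
    | zero => exact (Category.id_comp _).symm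
    | succ n => rfl

/-- The `next` natural transformation `ν^C_X : X → L^C X`, componentwise. -/
def gnext {T : C} (hT : IsTerminal T) (X : GObj C) : X ⟶ LObj hT X where
  app n :=
    match n with
    | 0 => hT.from (X.obj 0)
    | n + 1 => X.res n
  nat n := by
    cases n with
    | zero => exact hT.hom_ext _ _
    | succ n => rfl

end GObj

/-!
In degree `0` both sides are singletons: a truncated transformation of length `0` into `L^C Y`
is a single map into the terminal object. In degree `n + 1` the component `g₀` of a truncated
transformation `L^C X → L^C Y` is again forced to be the terminal map, so dropping it identifies
`(g₀, …, g_{n+1})` with a truncated transformation `X → Y` of length `n`; this shift commutes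
with restriction.
-/

namespace GObj

variable {C : Type u} [Category.{v} C]

def isoMk {X Y : GObj C} (e : ∀ n, X.obj n ≅ Y.obj n)
    (nat : ∀ n, X.res n ≫ (e n).hom = (e (n + 1)).hom ≫ Y.res n) : X ≅ Y where
  hom := { app := fun n => (e n).hom, nat := nat }
  inv :=
    { app := fun n => (e n).inv
      nat := fun n => by
        rw [Iso.comp_inv_eq, Category.assoc, nat, Iso.inv_hom_id_assoc] }
  hom_inv_id := GHom.ext (funext fun n => (e n).hom_inv_id)
  inv_hom_id := GHom.ext (funext fun n => (e n).inv_hom_id)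

section Later

variable {T : C} (hT : IsTerminal T) {X Y : GObj C}

theorem TruncHom.ext_succ {n : ℕ} {f g : TruncHom (LObj hT X) (LObj hT Y) n}
    (h : ∀ k (hk : k + 1 ≤ n), f.app (k + 1) hk = g.app (k + 1) hk) : f = g := by
  ext (_ | k) hk
  · exact hT.hom_ext _ _
  · exact h k hk

instance : Unique (TruncHom (LObj hT X) (LObj hT Y) 0) where
  default :=
    { app := fun k _ =>
        match k with
        | 0 => hT.from _
        | _ + 1 => by omega
      nat := fun _ h => by omega }
  uniq _ := TruncHom.ext_succ hT fun _ hk => by omega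

def shiftUp {n : ℕ} (f : TruncHom X Y n) : TruncHom (LObj hT X) (LObj hT Y) (n + 1) where
  app k h :=
    match k with
    | 0 => hT.from _
    | k + 1 => f.app k (Nat.succ_le_succ_iff.mp h)
  nat k h :=
    match k with
    | 0 => hT.hom_ext _ _
    | k + 1 => f.nat k (Nat.succ_le_succ_iff.mp h)

def shiftDown {n : ℕ} (g : TruncHom (LObj hT X) (LObj hT Y) (n + 1)) : TruncHom X Y n where
  app k h := g.app (k + 1) (Nat.succ_le_succ h)
  nat k h := g.nat (k + 1) (Nat.succ_le_succ h)

def shiftEquiv (n : ℕ) : TruncHom X Y n ≃ TruncHom (LObj hT X) (LObj hT Y) (n + 1) where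
  toFun := shiftUp hT
  invFun := shiftDown hT
  left_inv _ := rfl
  right_inv _ := TruncHom.ext_succ hT fun _ _ => rfl

theorem shiftUp_tres {n : ℕ} (f : TruncHom X Y (n + 1)) :
    shiftUp hT (tres f) = tres (shiftUp hT f) :=
  TruncHom.ext_succ hT fun _ _ => rfl

def laterHomEquiv (X Y : GObj C) :
    ∀ n, LaterTObj (homObj X Y) n ≃ TruncHom (LObj hT X) (LObj hT Y) n
  | 0 => Equiv.ofUnique PUnit _
  | n + 1 => shiftEquiv hT n

end Later

end GObj

open GObj in
/-- `L^Set (C^∞(X,Y)) ≅ C^∞(L^C X, L^C Y)` in the topos of trees. -/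
theorem later_of_hom_iso_hom_of_later {C : Type u} [Category.{v} C]
    {T : C} (hT : IsTerminal T) (X Y : GObj C) :
    Nonempty (LaterT (homObj X Y) ≅ homObj (LObj hT X) (LObj hT Y)) := by
  refine ⟨isoMk (fun n => (laterHomEquiv hT X Y n).toIso) ?_⟩
  rintro (_ | n) <;> ext f
  · exact Subsingleton.elim (α := TruncHom (LObj hT X) (LObj hT Y) 0) _ _
  · exact shiftUp_tres hT f
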